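/- Let D1, D2 be distortions relative to G with D1(x_G) ≥ D2(x_G), let C_AMO be the associated Archimedean-based Marshall-Olkin copula, and let μ be a probability measure on [0,1]² with μ([0,u]×[0,v]) = C_AMO(u,v) for all (u,v). Fix t ∈ (0,1), set g = D1 + f, u_t = G(g^{-1}(G^{-1}(t))), and B1 = {(u,v) ∈ [0,1]² : u ∈ [u_t, 1], v ≤ G(G^{-1}(t) − D1(G^{-1}(u)))}. Then μ(B1) = −G′(G^{-1}(t))·D1(G^{-1}(u_t)). -/

import Mathlib

/-!
Write `x = G⁻¹ t` and `x_s = g⁻¹ x`, so that `u_t = G x_s`, and let `M s` be the `μ`-mass of the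
part of `B₁` where `u > G s`. For `0 ≤ s ≤ s' ≤ x_s`, the slice of `B₁` over `G s' < u ≤ G s` is
squeezed between two rectangles inside the region where `C_AMO(u,v) = G(D₁(G⁻¹ u) + G⁻¹ v)`, of
masses `G x - G (x + Δ)` and `G (x - Δ) - G x` with `Δ = D₁ s' - D₁ s`. So `M` grows by
`-G'(x) Δ + o(Δ)`, and summing over a fine partition of `[0, x_s]` gives
`M x_s = -G'(x) D₁ x_s`. The segment `u = u_t` is `μ`-null because `C_AMO(u, 1) = u`.
-/

open MeasureTheory Filter Set Topology
open scoped ENNReal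

/-- `x_G := inf {x ≥ 0 : G x = 0}`, an extended nonnegative real (`⊤` if `G` never vanishes). -/
noncomputable def xG (G : ℝ → ℝ) : ℝ≥0∞ :=
  sInf {y : ℝ≥0∞ | ∃ x : ℝ, 0 ≤ x ∧ G x = 0 ∧ y = ENNReal.ofReal x}

/-- The interval `[0, x_G]` as a subset of `ℝ` (all of `[0,∞)` when `x_G = +∞`). -/
def distortionDomain (G : ℝ → ℝ) : Set ℝ :=
  {x : ℝ | 0 ≤ x ∧ ENNReal.ofReal x ≤ xG G}

/-- The hypotheses on the Archimedean generator `G`: `G(0) = 1`, `G : [0,∞) → [0,1]`,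
`G` is differentiable on `(0,∞)` with non-positive, non-decreasing and concave derivative,
and `G` is strictly decreasing on `[0, x_G)`. -/
structure IsGenerator (G : ℝ → ℝ) : Prop where
  one_at_zero : G 0 = 1
  mem_Icc : ∀ x : ℝ, 0 ≤ x → G x ∈ Set.Icc (0:ℝ) 1
  diff : ∀ x ∈ Set.Ioi (0:ℝ), DifferentiableAt ℝ G x
  deriv_nonpos : ∀ x ∈ Set.Ioi (0:ℝ), deriv G x ≤ 0
  deriv_mono : MonotoneOn (deriv G) (Set.Ioi (0:ℝ))
  deriv_concave : ConcaveOn ℝ (Set.Ioi (0:ℝ)) (deriv G)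
  strictAnti : ∀ a b : ℝ, 0 ≤ a → a < b → ENNReal.ofReal b < xG G → G b < G a

/-- `Ginv` is the inverse of `G`, mapping `(0,1]` onto `[0, x_G)`. -/
structure IsGenInv (G Ginv : ℝ → ℝ) : Prop where
  nonneg : ∀ u ∈ Set.Ioc (0:ℝ) 1, 0 ≤ Ginv u
  le_xG : ∀ u ∈ Set.Ioc (0:ℝ) 1, ENNReal.ofReal (Ginv u) ≤ xG G
  right_inv : ∀ u ∈ Set.Ioc (0:ℝ) 1, G (Ginv u) = u
  left_inv : ∀ x : ℝ, 0 ≤ x → ENNReal.ofReal x < xG G → Ginv (G x) = x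

/-- A distortion relative to `G`: a strictly increasing continuous function on `[0, x_G]`
with `D(0) = 0`, such that `D̂(x) = x − D(x)` is also strictly increasing and, when
`x_G = +∞`, both `D` and `D̂` tend to `+∞`. -/
structure IsDistortion (G D : ℝ → ℝ) : Prop where
  strictMono : StrictMonoOn D (distortionDomain G)
  cont : ContinuousOn D (distortionDomain G)
  zero : D 0 = 0
  hatStrictMono : StrictMonoOn (fun x => x - D x) (distortionDomain G)
  tendsto_top : xG G = ⊤ → Filter.Tendsto D Filter.atTop Filter.atTop
  hat_tendsto_top : xG G = ⊤ → Filter.Tendsto (fun x => x - D x) Filter.atTop Filter.atTop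

/-- `C` is the Archimedean-based Marshall-Olkin copula with generator `G` (with inverse
`Ginv`) and distortions `D1`, `D2`, where `f = D̂₂⁻¹ ∘ D̂₁` and `finv = D̂₁⁻¹ ∘ D̂₂`:
it vanishes on the boundary `u = 0` or `v = 0`, and on `(0,1]²` it is given by the
two-case piecewise formula of Definition 3.3, the case being selected according to
whether `D₁(x_G) ≥ D₂(x_G)` or `D₁(x_G) < D₂(x_G)`. -/
def AMOSpec (G Ginv D1 D2 f finv : ℝ → ℝ) (C : ℝ → ℝ → ℝ) : Prop :=
  (∀ u : ℝ, C u 0 = 0 ∧ C 0 u = 0) ∧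
  ((xG G ≠ ⊤ → D2 ((xG G).toReal) ≤ D1 ((xG G).toReal)) →
    ∀ u ∈ Set.Ioc (0:ℝ) 1, ∀ v ∈ Set.Ioc (0:ℝ) 1,
      (v ≤ G (f (Ginv u)) → C u v = G (D1 (Ginv u) + Ginv v)) ∧
      (G (f (Ginv u)) < v → C u v = G (Ginv u + D2 (Ginv v)))) ∧
  ((xG G ≠ ⊤ ∧ D1 ((xG G).toReal) < D2 ((xG G).toReal)) →
    ∀ u ∈ Set.Ioc (0:ℝ) 1, ∀ v ∈ Set.Ioc (0:ℝ) 1,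
      (G (finv (Ginv v)) ≤ u → C u v = G (D1 (Ginv u) + Ginv v)) ∧
      (u < G (finv (Ginv v)) → C u v = G (Ginv u + D2 (Ginv v))))

theorem HasDerivAt.exists_abs_add_mul_le {φ : ℝ → ℝ} {φ' x ε : ℝ} (hφ : HasDerivAt φ φ' x)
    (hε : 0 < ε) :
    ∃ δ > 0, ∀ d, 0 ≤ d → d < δ → ∀ y ∈ Icc (φ x - φ (x + d)) (φ (x - d) - φ x),
      |y + φ' * d| ≤ ε * d := by
  obtain ⟨δ, hδ, hsmall⟩ := Metric.eventually_nhds_iff.1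
    ((hasDerivAt_iff_isLittleO_nhds_zero.1 hφ).def hε)
  refine ⟨δ, hδ, fun d hd0 hdδ y ⟨hy₁, hy₂⟩ => abs_le.2 ⟨?_, ?_⟩⟩
  · have := hsmall (y := d) (by simpa [abs_of_nonneg hd0] using hdδ)
    simp only [Real.norm_eq_abs, smul_eq_mul, abs_of_nonneg hd0] at this
    linarith [(abs_le.1 this).2]
  · have := hsmall (y := -d) (by simpa [abs_of_nonneg hd0] using hdδ)
    simp only [Real.norm_eq_abs, smul_eq_mul, abs_neg, abs_of_nonneg hd0, ← sub_eq_add_neg]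
      at this
    linarith [(abs_le.1 this).2]

theorem sub_eq_mul_sub_of_forall_abs_le {m D : ℝ → ℝ} {a b c : ℝ} (hab : a ≤ b)
    (hD : ContinuousOn D (Icc a b)) (hDm : MonotoneOn D (Icc a b))
    (h : ∀ ε > 0, ∃ δ > 0, ∀ s ∈ Icc a b, ∀ s' ∈ Icc a b, s ≤ s' → D s' - D s < δ →
      |m s' - m s - c * (D s' - D s)| ≤ ε * (D s' - D s)) :
    m b - m a = c * (D b - D a) := by
  have hK : 0 ≤ D b - D a := sub_nonneg.2 (hDm (left_mem_Icc.2 hab) (right_mem_Icc.2 hab) hab)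
  suffices key : ∀ ε > 0, |m b - m a - c * (D b - D a)| ≤ ε * (D b - D a) by
    refine sub_eq_zero.1 (abs_nonpos_iff.1 (le_of_forall_pos_le_add fun ε hε => ?_))
    have hK1 : 0 < D b - D a + 1 := by linarith
    calc _ ≤ ε / (D b - D a + 1) * (D b - D a) := key _ (div_pos hε hK1)
      _ ≤ ε / (D b - D a + 1) * (D b - D a + 1) := by gcongr; linarith
      _ = 0 + ε := by field_simp; ring
  intro ε hε
  obtain ⟨δ, hδ, hsmall⟩ := h ε hε
  obtain ⟨η, hη, hunif⟩ := Metric.uniformContinuousOn_iff.1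
    (isCompact_Icc.uniformContinuousOn_of_continuous hD) δ hδ
  obtain ⟨n, hn⟩ := exists_nat_gt ((b - a) / η)
  have hn0 : (0 : ℝ) < n := lt_of_le_of_lt (div_nonneg (sub_nonneg.2 hab) hη.le) hn
  set w : ℕ → ℝ := fun i => a + (b - a) * i / n
  have hw_mono : Monotone w := fun i j hij => by
    simp only [w]; gcongr
  have hw_mem : ∀ i ≤ n, w i ∈ Icc a b := fun i hi => by
    have h0 : (0 : ℝ) ≤ (b - a) * i / n := by have := sub_nonneg.2 hab; positivity
    refine ⟨by simp only [w]; linarith, ?_⟩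
    simpa [w, hn0.ne'] using hw_mono hi
  have hw_step : ∀ i, dist (w (i + 1)) (w i) < η := fun i => by
    simp only [w, Real.dist_eq]
    rw [abs_of_nonneg (by push_cast; field_simp; linarith)]
    push_cast
    rw [div_lt_iff₀ hη] at hn
    field_simp
    linarith
  set Δ : ℕ → ℝ := fun i => D (w (i + 1)) - D (w i)
  have hΔ : ∀ i < n, |m (w (i + 1)) - m (w i) - c * Δ i| ≤ ε * Δ i := fun i hi =>
    hsmall _ (hw_mem i hi.le) _ (hw_mem (i + 1) hi) (hw_mono (Nat.le_succ i))
      (lt_of_le_of_lt (le_abs_self _)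
        (by simpa [Real.dist_eq] using hunif _ (hw_mem (i + 1) hi) _ (hw_mem i hi.le) (hw_step i)))
  have hw0 : w 0 = a := by simp [w]
  have hwn : w n = b := by simp [w, hn0.ne']
  have htel : ∀ F : ℝ → ℝ, ∑ i ∈ Finset.range n, (F (w (i + 1)) - F (w i)) = F b - F a :=
    fun F => by simpa [hw0, hwn] using Finset.sum_range_sub (F ∘ w) n
  calc |m b - m a - c * (D b - D a)|
      = |∑ i ∈ Finset.range n, (m (w (i + 1)) - m (w i) - c * Δ i)| := by
        rw [Finset.sum_sub_distrib, ← Finset.mul_sum, htel, htel]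
    _ ≤ ∑ i ∈ Finset.range n, ε * Δ i :=
        (Finset.abs_sum_le_sum_abs _ _).trans
          (Finset.sum_le_sum fun i hi => hΔ i (Finset.mem_range.1 hi))
    _ = ε * (D b - D a) := by rw [← Finset.mul_sum, htel]

theorem sub_eq_neg_deriv_mul_of_increment_mem_Icc {φ m D : ℝ → ℝ} {φ' x a b : ℝ}
    (hφ : HasDerivAt φ φ' x) (hab : a ≤ b) (hD : ContinuousOn D (Icc a b))
    (hDm : MonotoneOn D (Icc a b))
    (hm : ∀ s ∈ Icc a b, ∀ s' ∈ Icc a b, s ≤ s' →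
      m s' - m s ∈ Icc (φ x - φ (x + (D s' - D s))) (φ (x - (D s' - D s)) - φ x)) :
    m b - m a = -φ' * (D b - D a) := by
  refine sub_eq_mul_sub_of_forall_abs_le hab hD hDm fun ε hε => ?_
  obtain ⟨δ, hδ, hsmall⟩ := hφ.exists_abs_add_mul_le hε
  refine ⟨δ, hδ, fun s hs s' hs' hss' hsδ => ?_⟩
  simpa [neg_mul, sub_neg_eq_add] using
    hsmall _ (sub_nonneg.2 (hDm hs hs' hss')) hsδ _ (hm s hs s' hs' hss')

namespace IsGenerator

variable {G : ℝ → ℝ}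

theorem antitoneOn (hG : IsGenerator G) : AntitoneOn G (Ici 0) := by
  have hpos : AntitoneOn G (Ioi 0) :=
    antitoneOn_of_deriv_nonpos (convex_Ioi 0)
      (fun x hx => (hG.diff x hx).continuousAt.continuousWithinAt)
      (fun x hx => (hG.diff x (interior_subset hx)).differentiableWithinAt)
      (fun x hx => hG.deriv_nonpos x (interior_subset hx))
  intro a ha b hb hab
  rcases (mem_Ici.1 ha).eq_or_lt with rfl | ha0
  · exact hG.one_at_zero ▸ (hG.mem_Icc b hb).2
  · exact hpos ha0 (ha0.trans_le hab) hab

theorem pos_of_ofReal_lt_xG (hG : IsGenerator G) {x : ℝ} (hx : 0 ≤ x)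
    (hxG : ENNReal.ofReal x < xG G) : 0 < G x :=
  (hG.mem_Icc x hx).1.lt_of_ne' fun h => hxG.not_ge (sInf_le ⟨x, hx, h, rfl⟩)

theorem apply_eq_zero_of_ofReal_eq_xG (hG : IsGenerator G) {x : ℝ} (hx : 0 < x)
    (hxG : ENNReal.ofReal x = xG G) : G x = 0 := by
  by_contra hne
  obtain ⟨ε, hε, hball⟩ := Metric.eventually_nhds_iff.1
    ((hG.diff x hx).continuousAt.eventually_ne hne)
  have hlt : xG G < ENNReal.ofReal (x + ε) := by
    rw [← hxG, ENNReal.ofReal_lt_ofReal_iff (by linarith)]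
    linarith
  obtain ⟨_, ⟨z, hz0, hGz, rfl⟩, hzlt⟩ := sInf_lt_iff.1 hlt
  have hxz : x ≤ z := (ENNReal.ofReal_le_ofReal_iff hz0).1 (hxG ▸ sInf_le ⟨z, hz0, hGz, rfl⟩)
  have hzx : z < x + ε := (ENNReal.ofReal_lt_ofReal_iff_of_nonneg hz0).1 hzlt
  exact hball (y := z) (by rw [Real.dist_eq, abs_lt]; constructor <;> linarith) hGz

theorem ofReal_lt_xG (hG : IsGenerator G) {x : ℝ} (hx : x ∈ distortionDomain G) (hx0 : 0 < x)
    (hGx : G x ≠ 0) : ENNReal.ofReal x < xG G :=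
  hx.2.lt_of_ne fun h => hGx (hG.apply_eq_zero_of_ofReal_eq_xG hx0 h)

theorem apply_lt_one (hG : IsGenerator G) {x : ℝ} (hx : x ∈ distortionDomain G) (hx0 : 0 < x) :
    G x < 1 := by
  by_cases hGx : G x = 0
  · rw [hGx]; exact one_pos
  · exact hG.one_at_zero ▸ hG.strictAnti 0 x le_rfl hx0 (hG.ofReal_lt_xG hx hx0 hGx)

end IsGenerator

theorem zero_mem_distortionDomain {G : ℝ → ℝ} : (0 : ℝ) ∈ distortionDomain G :=
  ⟨le_rfl, by simp⟩

theorem mem_distortionDomain_of_le {G : ℝ → ℝ} {x y : ℝ} (hy : y ∈ distortionDomain G)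
    (hx : 0 ≤ x) (hxy : x ≤ y) : x ∈ distortionDomain G :=
  ⟨hx, (ENNReal.ofReal_le_ofReal hxy).trans hy.2⟩

theorem mem_distortionDomain_of_ofReal_lt {G : ℝ → ℝ} {x : ℝ} (hx : 0 ≤ x)
    (hxG : ENNReal.ofReal x < xG G) : x ∈ distortionDomain G :=
  ⟨hx, hxG.le⟩

namespace IsGenInv

variable {G Ginv : ℝ → ℝ}

theorem mem_distortionDomain (hGinv : IsGenInv G Ginv) {u : ℝ} (hu : u ∈ Ioc 0 1) :
    Ginv u ∈ distortionDomain G :=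
  ⟨hGinv.nonneg u hu, hGinv.le_xG u hu⟩

theorem pos (hG : IsGenerator G) (hGinv : IsGenInv G Ginv) {u : ℝ} (hu : u ∈ Ioo 0 1) :
    0 < Ginv u := by
  have hu' : u ∈ Ioc 0 1 := Ioo_subset_Ioc_self hu
  refine (hGinv.nonneg u hu').lt_of_ne' fun h => hu.2.ne ?_
  rw [← hGinv.right_inv u hu', h, hG.one_at_zero]

theorem apply_one (hG : IsGenerator G) (hGinv : IsGenInv G Ginv) (hxG : 0 < xG G) :
    Ginv 1 = 0 := by
  simpa [hG.one_at_zero] using hGinv.left_inv 0 le_rfl (by simpa using hxG)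

theorem mem_Icc_of_mem_Ioc (hG : IsGenerator G) (hGinv : IsGenInv G Ginv) {s s' u : ℝ}
    (hs : 0 ≤ s) (hsG : ENNReal.ofReal s < xG G) (hs' : 0 ≤ s') (hu : u ∈ Ioc (G s') (G s)) :
    Ginv u ∈ Icc s s' := by
  have hu' : u ∈ Ioc 0 1 :=
    ⟨(hG.mem_Icc s' hs').1.trans_lt hu.1, hu.2.trans (hG.mem_Icc s hs).2⟩
  have hGu := hGinv.right_inv u hu'
  constructor
  · by_contra! h
    exact (hGu ▸ hG.strictAnti _ s (hGinv.nonneg u hu') h hsG).not_ge hu.2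
  · by_contra! h
    exact (hGu ▸ hG.antitoneOn hs' (hGinv.nonneg u hu') h.le).not_gt hu.1

end IsGenInv

namespace IsDistortion

variable {G D : ℝ → ℝ}

theorem nonneg (hD : IsDistortion G D) {x : ℝ} (hx : x ∈ distortionDomain G) : 0 ≤ D x :=
  hD.zero ▸ hD.strictMono.monotoneOn zero_mem_distortionDomain hx hx.1

theorem le_self (hD : IsDistortion G D) {x : ℝ} (hx : x ∈ distortionDomain G) : D x ≤ x := by
  have := hD.hatStrictMono.monotoneOn zero_mem_distortionDomain hx hx.1
  simp only [hD.zero, sub_zero] at this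
  linarith

theorem exists_hat_eq (hD : IsDistortion G D) {c : ℝ} (hc : 0 ≤ c)
    (hcG : xG G ≠ ⊤ → c ≤ (xG G).toReal - D (xG G).toReal) :
    ∃ z ∈ distortionDomain G, z - D z = c := by
  suffices ∃ M, 0 ≤ M ∧ Icc 0 M ⊆ distortionDomain G ∧ c ≤ M - D M by
    obtain ⟨M, hM0, hMdom, hcM⟩ := this
    obtain ⟨z, hz, hzc⟩ := intermediate_value_Icc hM0
      (continuousOn_id.sub (hD.cont.mono hMdom)) (show c ∈ Icc (0 - D 0) (M - D M) by
        rw [hD.zero, sub_zero]; exact ⟨hc, hcM⟩)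
    exact ⟨z, hMdom hz, hzc⟩
  rcases eq_or_ne (xG G) ⊤ with htop | hfin
  · obtain ⟨M, hcM, hM0⟩ :=
      ((tendsto_atTop.1 (hD.hat_tendsto_top htop) c).and (eventually_ge_atTop 0)).exists
    exact ⟨M, hM0, fun x hx => ⟨hx.1, by simp [htop]⟩, hcM⟩
  · refine ⟨(xG G).toReal, ENNReal.toReal_nonneg, fun x hx => ⟨hx.1, ?_⟩, hcG hfin⟩
    exact (ENNReal.ofReal_le_ofReal hx.2).trans ENNReal.ofReal_toReal_le

end IsDistortion

/-- `f = D̂₂⁻¹ ∘ D̂₁` on `distortionDomain G`, where `D̂ᵢ x = x - Dᵢ x`. -/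
def IsHatInvComp (G D1 D2 f : ℝ → ℝ) : Prop :=
  ∀ y ∈ distortionDomain G, f y ∈ distortionDomain G ∧ f y - D2 (f y) = y - D1 y

theorem isHatInvComp_of_invFunOn {G D1 D2 f : ℝ → ℝ} (hD1 : IsDistortion G D1)
    (hD2 : IsDistortion G D2) (hcase : xG G ≠ ⊤ → D2 ((xG G).toReal) ≤ D1 ((xG G).toReal))
    (hf : ∀ x, f x = Function.invFunOn (fun w => w - D2 w) (distortionDomain G) (x - D1 x)) :
    IsHatInvComp G D1 D2 f := by
  intro y hy
  have hex : ∃ z ∈ distortionDomain G, z - D2 z = y - D1 y := by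
    refine hD2.exists_hat_eq (sub_nonneg.2 (hD1.le_self hy)) fun hfin => ?_
    have hxG : (xG G).toReal ∈ distortionDomain G :=
      ⟨ENNReal.toReal_nonneg, ENNReal.ofReal_toReal_le⟩
    have hy_le : y ≤ (xG G).toReal := (ENNReal.ofReal_le_iff_le_toReal hfin).1 hy.2
    linarith [hD1.hatStrictMono.monotoneOn hy hxG hy_le, hcase hfin]
  rw [hf y]
  exact ⟨Function.invFunOn_mem hex, Function.invFunOn_eq hex⟩

namespace IsHatInvComp

variable {G D1 D2 f : ℝ → ℝ} {x y : ℝ}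

theorem monotoneOn (hD1 : IsDistortion G D1) (hD2 : IsDistortion G D2)
    (hf : IsHatInvComp G D1 D2 f) : MonotoneOn f (distortionDomain G) := by
  intro y hy y' hy' hyy'
  rw [← hD2.hatStrictMono.le_iff_le (hf y hy).1 (hf y' hy').1, (hf y hy).2, (hf y' hy').2]
  exact hD1.hatStrictMono.monotoneOn hy hy' hyy'

theorem pos (hD1 : IsDistortion G D1) (hD2 : IsDistortion G D2) (hf : IsHatInvComp G D1 D2 f)
    (hy : y ∈ distortionDomain G) (hy0 : 0 < y) : 0 < f y := by
  have h : 0 - D1 0 < y - D1 y := hD1.hatStrictMono zero_mem_distortionDomain hy hy0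
  refine (hD2.hatStrictMono.lt_iff_lt zero_mem_distortionDomain (hf y hy).1).1 ?_
  simpa only [(hf y hy).2, hD1.zero, hD2.zero] using h

theorem apply_zero (hD1 : IsDistortion G D1) (hD2 : IsDistortion G D2)
    (hf : IsHatInvComp G D1 D2 f) : f 0 = 0 := by
  have h : f 0 - D2 (f 0) = 0 - D2 0 := by
    rw [(hf 0 zero_mem_distortionDomain).2, hD1.zero, hD2.zero]
  exact hD2.hatStrictMono.injOn (hf 0 zero_mem_distortionDomain).1 zero_mem_distortionDomain h

theorem le_of_add_eq (hD2 : IsDistortion G D2) (hf : IsHatInvComp G D1 D2 f)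
    (hy : y ∈ distortionDomain G) (hyx : D1 y + f y = x) : y ≤ x := by
  linarith [(hf y hy).2, hD2.nonneg (hf y hy).1]

/-- The equation `D₁ w + f w = x` is solved through `w = x - D₂ z`, `z = f w`, i.e. by a zero of
`z ↦ D̂₁ (x - D₂ z) - D̂₂ z` on `[0, x]`. -/
theorem exists_add_eq (hD1 : IsDistortion G D1) (hD2 : IsDistortion G D2)
    (hf : IsHatInvComp G D1 D2 f) (hx : x ∈ distortionDomain G) :
    ∃ w ∈ distortionDomain G, D1 w + f w = x := by
  have hsub : Icc 0 x ⊆ distortionDomain G := fun z hz => mem_distortionDomain_of_le hx hz.1 hz.2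
  have hmaps : MapsTo (fun z => x - D2 z) (Icc 0 x) (Icc 0 x) := fun z hz =>
    ⟨by linarith [hD2.le_self (hsub hz), hz.2], by linarith [hD2.nonneg (hsub hz)]⟩
  have hcont : ContinuousOn (fun z => (x - D2 z) - D1 (x - D2 z) - (z - D2 z)) (Icc 0 x) := by
    have hD2c := hD2.cont.mono hsub
    exact ((continuousOn_const.sub hD2c).sub ((hD1.cont.mono hsub).comp
      (continuousOn_const.sub hD2c) hmaps)).sub (continuousOn_id.sub hD2c)
  have hx_mem : x ∈ Icc 0 x := ⟨hx.1, le_rfl⟩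
  obtain ⟨z, hz, hz0⟩ := intermediate_value_Icc' hx.1 hcont (show (0 : ℝ) ∈ Icc _ _ from
    ⟨by linarith [hD1.nonneg (hsub (hmaps hx_mem))], by simp [hD2.zero, hD1.le_self hx]⟩)
  have hw := hsub (hmaps hz)
  have hfw : f (x - D2 z) = z :=
    hD2.hatStrictMono.injOn (hf _ hw).1 (hsub hz) (by simp only at hz0; linarith [(hf _ hw).2])
  exact ⟨x - D2 z, hw, by simp only at hz0; linarith⟩

end IsHatInvComp

namespace AMOSpec

variable {G Ginv D1 D2 f finv : ℝ → ℝ} {C : ℝ → ℝ → ℝ}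

theorem apply_one (hG : IsGenerator G) (hGinv : IsGenInv G Ginv) (hD1 : IsDistortion G D1)
    (hD2 : IsDistortion G D2) (hcase : xG G ≠ ⊤ → D2 ((xG G).toReal) ≤ D1 ((xG G).toReal))
    (hf : IsHatInvComp G D1 D2 f) (hC : AMOSpec G Ginv D1 D2 f finv C) {u : ℝ}
    (hu : u ∈ Ioo 0 1) : C u 1 = u := by
  have hu' := Ioo_subset_Ioc_self hu
  have hy := hGinv.mem_distortionDomain hu'
  have hy0 := hGinv.pos hG hu
  have hxG : 0 < xG G := (ENNReal.ofReal_pos.2 hy0).trans_le hy.2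
  rw [(hC.2.1 hcase u hu' 1 ⟨one_pos, le_rfl⟩).2
      (hG.apply_lt_one (hf _ hy).1 (hf.pos hD1 hD2 hy hy0)),
    hGinv.apply_one hG hxG, hD2.zero, add_zero, hGinv.right_inv u hu']

theorem apply_G_G (hG : IsGenerator G) (hGinv : IsGenInv G Ginv)
    (hcase : xG G ≠ ⊤ → D2 ((xG G).toReal) ≤ D1 ((xG G).toReal))
    (hC : AMOSpec G Ginv D1 D2 f finv C) {a y : ℝ} (ha : 0 ≤ a) (haG : ENNReal.ofReal a < xG G)
    (hy : 0 ≤ y) (hyG : ENNReal.ofReal y < xG G) (hfa : f a ∈ Icc 0 y) :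
    C (G a) (G y) = G (D1 a + y) := by
  have hGa : G a ∈ Ioc 0 1 := ⟨hG.pos_of_ofReal_lt_xG ha haG, (hG.mem_Icc a ha).2⟩
  have hGy : G y ∈ Ioc 0 1 := ⟨hG.pos_of_ofReal_lt_xG hy hyG, (hG.mem_Icc y hy).2⟩
  rw [(hC.2.1 hcase _ hGa _ hGy).1, hGinv.left_inv a ha haG, hGinv.left_inv y hy hyG]
  rw [hGinv.left_inv a ha haG]
  exact hG.antitoneOn hfa.1 hy hfa.2

end AMOSpec

section Rectangles

variable {μ : Measure (ℝ × ℝ)} [IsFiniteMeasure μ]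

theorem measureReal_Ioc_prod_eq_sub {a b c : ℝ} {V : Set ℝ} (hV : MeasurableSet V)
    (hca : c ≤ a) (hab : a ≤ b) :
    μ.real (Ioc a b ×ˢ V) = μ.real (Icc c b ×ˢ V) - μ.real (Icc c a ×ˢ V) := by
  rw [← measureReal_sdiff (prod_mono (Icc_subset_Icc_right hab) subset_rfl)
    (measurableSet_Icc.prod hV)]
  congr 1
  ext ⟨u, v⟩
  simp only [mem_prod, mem_Ioc, Set.mem_sdiff]
  constructor
  · rintro ⟨⟨hau, hub⟩, hv⟩
    exact ⟨⟨⟨hca.trans hau.le, hub⟩, hv⟩, fun h => h.1.2.not_gt hau⟩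
  · rintro ⟨⟨⟨hcu, hub⟩, hv⟩, h⟩
    exact ⟨⟨lt_of_not_ge fun hua => h ⟨⟨hcu, hua⟩, hv⟩, hub⟩, hv⟩

theorem measureReal_inter_fst_Ioi_sub (S : Set (ℝ × ℝ)) {r r' : ℝ} (h : r' ≤ r) :
    μ.real (S ∩ Prod.fst ⁻¹' Ioi r') - μ.real (S ∩ Prod.fst ⁻¹' Ioi r) =
      μ.real (S ∩ Prod.fst ⁻¹' Ioc r' r) := by
  rw [← measureReal_inter_add_sdiff (s := S ∩ Prod.fst ⁻¹' Ioi r')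
    ((measurableSet_Iic (a := r)).preimage measurable_fst)]
  have h₁ : S ∩ Prod.fst ⁻¹' Ioi r' ∩ Prod.fst ⁻¹' Iic r = S ∩ Prod.fst ⁻¹' Ioc r' r := by
    ext p; simp [and_assoc]
  have h₂ : (S ∩ Prod.fst ⁻¹' Ioi r') \ (Prod.fst ⁻¹' Iic r) = S ∩ Prod.fst ⁻¹' Ioi r := by
    ext p
    simp only [Set.mem_sdiff, mem_inter_iff, mem_preimage, mem_Ioi, mem_Iic, not_le]
    exact ⟨fun h' => ⟨h'.1.1, h'.2⟩, fun h' => ⟨⟨h'.1, lt_of_le_of_lt h h'.2⟩, h'.2⟩⟩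
  rw [h₁, h₂, add_sub_cancel_right]

theorem measureReal_singleton_prod_eq_zero {C : ℝ → ℝ → ℝ}
    (hμ : ∀ u ∈ Icc (0:ℝ) 1, ∀ v ∈ Icc (0:ℝ) 1, μ (Icc 0 u ×ˢ Icc 0 v) = ENNReal.ofReal (C u v))
    (hC1 : ∀ u ∈ Ioo 0 1, C u 1 = u) {u₀ : ℝ}
    (hu₀ : u₀ ∈ Ioo 0 1) : μ.real ({u₀} ×ˢ Icc 0 1) = 0 := by
  refine le_antisymm (le_of_forall_pos_le_add fun ε hε => ?_) measureReal_nonneg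
  set u := max (u₀ / 2) (u₀ - ε)
  have huu₀ : u < u₀ := max_lt (by linarith [hu₀.1]) (by linarith)
  have hu : u ∈ Ioo 0 1 := ⟨lt_max_of_lt_left (by linarith [hu₀.1]), huu₀.trans hu₀.2⟩
  have hreal : ∀ w ∈ Ioo (0:ℝ) 1, μ.real (Icc 0 w ×ˢ Icc 0 1) = w := fun w hw => by
    rw [measureReal_def, hμ w (Ioo_subset_Icc_self hw) 1 ⟨zero_le_one, le_rfl⟩, hC1 w hw,
      ENNReal.toReal_ofReal hw.1.le]
  calc μ.real ({u₀} ×ˢ Icc 0 1) ≤ μ.real (Ioc u u₀ ×ˢ Icc 0 1) :=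
        measureReal_mono (prod_mono (singleton_subset_iff.2 ⟨huu₀, le_rfl⟩) subset_rfl)
    _ = u₀ - u := by
        rw [measureReal_Ioc_prod_eq_sub measurableSet_Icc hu.1.le huu₀.le, hreal _ hu₀, hreal _ hu]
    _ ≤ 0 + ε := by linarith [le_max_right (u₀ / 2) (u₀ - ε)]

end Rectangles

/-- The part of `[u₀, 1] × [0, 1]` below the curve `v = G (x - D₁ (G⁻¹ u))`, which is the level
curve `C_AMO = G x` in the region where `C_AMO(u, v) = G (D₁ (G⁻¹ u) + G⁻¹ v)`. -/
def levelRegion (G Ginv D1 : ℝ → ℝ) (x u₀ : ℝ) : Set (ℝ × ℝ) :=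
  {p | p.1 ∈ Icc u₀ 1 ∧ p.2 ∈ Icc 0 1 ∧ p.2 ≤ G (x - D1 (Ginv p.1))}

theorem levelRegion_inter_fst_Ioc_subset {G Ginv D1 : ℝ → ℝ} (hG : IsGenerator G)
    (hGinv : IsGenInv G Ginv) (hD1 : IsDistortion G D1) {x u₀ s s' : ℝ} (hs : 0 ≤ s)
    (hsG : ENNReal.ofReal s < xG G) (hss' : s ≤ s') (hs' : s' ∈ distortionDomain G)
    (hD1s' : D1 s' ≤ x) (hu₀ : u₀ ≤ G s') :
    Ioc (G s') (G s) ×ˢ Icc 0 (G (x - D1 s)) ⊆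
        levelRegion G Ginv D1 x u₀ ∩ Prod.fst ⁻¹' Ioc (G s') (G s) ∧
      levelRegion G Ginv D1 x u₀ ∩ Prod.fst ⁻¹' Ioc (G s') (G s) ⊆
        Ioc (G s') (G s) ×ˢ Icc 0 (G (x - D1 s')) := by
  have hsdom := mem_distortionDomain_of_le hs' hs hss'
  have hD1m := hD1.strictMono.monotoneOn
  have hD1s : D1 s ≤ D1 s' := hD1m hsdom hs' hss'
  have hcurve : ∀ u ∈ Ioc (G s') (G s), D1 (Ginv u) ∈ Icc (D1 s) (D1 s') := fun u hu => by
    have h := hGinv.mem_Icc_of_mem_Ioc hG hs hsG hs'.1 hu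
    have hd := mem_distortionDomain_of_le hs' (hs.trans h.1) h.2
    exact ⟨hD1m hsdom hd h.1, hD1m hd hs' h.2⟩
  have hGanti := hG.antitoneOn
  constructor
  · rintro p ⟨hu, hv⟩
    have h := hcurve _ hu
    refine ⟨⟨⟨hu₀.trans hu.1.le, hu.2.trans (hG.mem_Icc s hs).2⟩,
      ⟨hv.1, hv.2.trans (hG.mem_Icc _ (by linarith)).2⟩, hv.2.trans ?_⟩, hu⟩
    exact hGanti (mem_Ici.2 (by linarith [h.2])) (mem_Ici.2 (by linarith)) (by linarith [h.1])
  · rintro p ⟨⟨_, hv, hvc⟩, hu⟩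
    have h := hcurve _ hu
    exact ⟨hu, hv.1, hvc.trans (hGanti (mem_Ici.2 (by linarith)) (mem_Ici.2 (by linarith [h.2]))
      (by linarith [h.2]))⟩

namespace AMOSpec

variable {G Ginv D1 D2 f finv : ℝ → ℝ} {C : ℝ → ℝ → ℝ} {μ : Measure (ℝ × ℝ)}
  [IsFiniteMeasure μ]

theorem measureReal_Ioc_prod_Icc (hG : IsGenerator G) (hGinv : IsGenInv G Ginv)
    (hD1 : IsDistortion G D1) (hcase : xG G ≠ ⊤ → D2 ((xG G).toReal) ≤ D1 ((xG G).toReal))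
    (hC : AMOSpec G Ginv D1 D2 f finv C)
    (hμ : ∀ u ∈ Icc (0:ℝ) 1, ∀ v ∈ Icc (0:ℝ) 1, μ (Icc 0 u ×ˢ Icc 0 v) = ENNReal.ofReal (C u v))
    {a b y : ℝ} (ha : 0 ≤ a) (hab : a ≤ b) (hbG : ENNReal.ofReal b < xG G) (hy : 0 ≤ y)
    (hyG : ENNReal.ofReal y < xG G) (hfa : f a ∈ Icc 0 y) (hfb : f b ∈ Icc 0 y) :
    μ.real (Ioc (G b) (G a) ×ˢ Icc 0 (G y)) = G (D1 a + y) - G (D1 b + y) := by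
  have hb : 0 ≤ b := ha.trans hab
  have hreal : ∀ c, 0 ≤ c → ENNReal.ofReal c < xG G → f c ∈ Icc 0 y →
      μ.real (Icc 0 (G c) ×ˢ Icc 0 (G y)) = G (D1 c + y) := fun c hc hcG hfc => by
    rw [measureReal_def, hμ _ (hG.mem_Icc c hc) _ (hG.mem_Icc y hy),
      hC.apply_G_G hG hGinv hcase hc hcG hy hyG hfc, ENNReal.toReal_ofReal
        (hG.mem_Icc _ (add_nonneg (hD1.nonneg (mem_distortionDomain_of_ofReal_lt hc hcG)) hy)).1]
  rw [measureReal_Ioc_prod_eq_sub measurableSet_Icc (hG.mem_Icc b hb).1 (hG.antitoneOn ha hb hab),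
    hreal a ha ((ENNReal.ofReal_le_ofReal hab).trans_lt hbG) hfa, hreal b hb hbG hfb]

theorem measureReal_levelRegion_inter_mem_Icc (hG : IsGenerator G) (hGinv : IsGenInv G Ginv)
    (hD1 : IsDistortion G D1) (hD2 : IsDistortion G D2)
    (hcase : xG G ≠ ⊤ → D2 ((xG G).toReal) ≤ D1 ((xG G).toReal))
    (hf : IsHatInvComp G D1 D2 f) (hC : AMOSpec G Ginv D1 D2 f finv C)
    (hμ : ∀ u ∈ Icc (0:ℝ) 1, ∀ v ∈ Icc (0:ℝ) 1, μ (Icc 0 u ×ˢ Icc 0 v) = ENNReal.ofReal (C u v))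
    {x xs s s' : ℝ} (hxs : xs ∈ distortionDomain G) (hx : D1 xs + f xs = x)
    (hxG : ENNReal.ofReal x < xG G) (hs : s ∈ Icc 0 xs) (hs' : s' ∈ Icc 0 xs) (hss' : s ≤ s') :
    μ.real (levelRegion G Ginv D1 x (G xs) ∩ Prod.fst ⁻¹' Ioc (G s') (G s)) ∈
      Icc (G x - G (x + (D1 s' - D1 s))) (G (x - (D1 s' - D1 s)) - G x) := by
  have hxsx : xs ≤ x := hf.le_of_add_eq hD2 hxs hx
  have hdom : ∀ r ∈ Icc 0 xs, r ∈ distortionDomain G := fun r hr =>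
    mem_distortionDomain_of_le hxs hr.1 hr.2
  have hlt : ∀ r ∈ Icc 0 xs, ENNReal.ofReal r < xG G := fun r hr =>
    (ENNReal.ofReal_le_ofReal (hr.2.trans hxsx)).trans_lt hxG
  have hxD1 : ∀ r ∈ Icc 0 xs, ENNReal.ofReal (x - D1 r) < xG G := fun r hr =>
    (ENNReal.ofReal_le_ofReal (by linarith [hD1.nonneg (hdom r hr)])).trans_lt hxG
  have hf0 : ∀ r ∈ Icc 0 xs, 0 ≤ f r := fun r hr => (hf r (hdom r hr)).1.1
  have hD1m := hD1.strictMono.monotoneOn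
  have hfm := hf.monotoneOn hD1 hD2
  have hD1s's : D1 s ≤ D1 s' := hD1m (hdom s hs) (hdom s' hs') hss'
  have hD1s' : D1 s' ≤ D1 xs := hD1m (hdom s' hs') hxs hs'.2
  have hfs' : f s' ≤ f xs := hfm (hdom s' hs') hxs hs'.2
  have hfs : f s ≤ f s' := hfm (hdom s hs) (hdom s' hs') hss'
  have hD1x : D1 xs ≤ x := by linarith [hf0 xs ⟨hxs.1, le_rfl⟩]
  obtain ⟨hlower, hupper⟩ := levelRegion_inter_fst_Ioc_subset (x := x) hG hGinv hD1 hs.1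
    (hlt s hs) hss' (hdom s' hs') (by linarith) (hG.antitoneOn hs'.1 hxs.1 hs'.2)
  constructor
  · calc G x - G (x + (D1 s' - D1 s))
        = μ.real (Ioc (G s') (G s) ×ˢ Icc 0 (G (x - D1 s))) := by
          rw [measureReal_Ioc_prod_Icc hG hGinv hD1 hcase hC hμ hs.1 hss' (hlt s' hs')
            (by linarith) (hxD1 s hs) ⟨hf0 s hs, by linarith⟩ ⟨hf0 s' hs', by linarith⟩]
          ring_nf
      _ ≤ _ := measureReal_mono hlower
  · calc _ ≤ μ.real (Ioc (G s') (G s) ×ˢ Icc 0 (G (x - D1 s'))) := measureReal_mono hupper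
      _ = G (x - (D1 s' - D1 s)) - G x := by
          rw [measureReal_Ioc_prod_Icc hG hGinv hD1 hcase hC hμ hs.1 hss' (hlt s' hs')
            (by linarith) (hxD1 s' hs') ⟨hf0 s hs, by linarith⟩ ⟨hf0 s' hs', by linarith⟩]
          ring_nf

theorem measureReal_levelRegion (hG : IsGenerator G) (hGinv : IsGenInv G Ginv)
    (hD1 : IsDistortion G D1) (hD2 : IsDistortion G D2)
    (hcase : xG G ≠ ⊤ → D2 ((xG G).toReal) ≤ D1 ((xG G).toReal))
    (hf : IsHatInvComp G D1 D2 f) (hC : AMOSpec G Ginv D1 D2 f finv C)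
    (hμ : ∀ u ∈ Icc (0:ℝ) 1, ∀ v ∈ Icc (0:ℝ) 1, μ (Icc 0 u ×ˢ Icc 0 v) = ENNReal.ofReal (C u v))
    {x xs : ℝ} (hxs : xs ∈ distortionDomain G) (hxs0 : 0 < xs) (hx : D1 xs + f xs = x)
    (hxG : ENNReal.ofReal x < xG G) :
    μ.real (levelRegion G Ginv D1 x (G xs)) = -deriv G x * D1 xs := by
  have hxsx := hf.le_of_add_eq hD2 hxs hx
  have hxsG := (ENNReal.ofReal_le_ofReal hxsx).trans_lt hxG
  have hsub : Icc 0 xs ⊆ distortionDomain G := fun s hs =>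
    mem_distortionDomain_of_le hxs hs.1 hs.2
  set L := levelRegion G Ginv D1 x (G xs)
  have hM := sub_eq_neg_deriv_mul_of_increment_mem_Icc
    (m := fun s => μ.real (L ∩ Prod.fst ⁻¹' Ioi (G s))) (hG.diff x (hxs0.trans_le hxsx)).hasDerivAt
    hxs.1 (hD1.cont.mono hsub) (hD1.strictMono.monotoneOn.mono hsub) fun s hs s' hs' hss' => by
      rw [measureReal_inter_fst_Ioi_sub _ (hG.antitoneOn hs.1 hs'.1 hss')]
      exact hC.measureReal_levelRegion_inter_mem_Icc hG hGinv hD1 hD2 hcase hf hμ hxs hx hxG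
        hs hs' hss'
  have hM0 : μ.real (L ∩ Prod.fst ⁻¹' Ioi (G 0)) = 0 := by
    rw [hG.one_at_zero, eq_empty_of_forall_notMem fun p (hp : p ∈ L ∩ Prod.fst ⁻¹' Ioi 1) =>
      not_lt.2 hp.1.1.2 hp.2, measureReal_empty]
  have hMxs : μ.real (L ∩ Prod.fst ⁻¹' Ioi (G xs)) = μ.real L := by
    have hnull : μ.real ({G xs} ×ˢ Icc 0 1) = 0 :=
      measureReal_singleton_prod_eq_zero hμ (fun u hu => hC.apply_one hG hGinv hD1 hD2 hcase hf hu)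
        ⟨hG.pos_of_ofReal_lt_xG hxs.1 hxsG, hG.apply_lt_one hxs hxs0⟩
    rw [← measureReal_inter_add_sdiff (s := L) (measurableSet_Ioi.preimage measurable_fst),
      measureReal_mono_null (fun p (hp : p ∈ L \ Prod.fst ⁻¹' Ioi (G xs)) =>
        show p ∈ {G xs} ×ˢ Icc 0 1 from ⟨le_antisymm (not_lt.1 hp.2) hp.1.1.1, hp.1.2.1⟩) hnull,
      add_zero]
  rw [hMxs, hM0, hD1.zero, sub_zero, sub_zero] at hM
  exact hM

end AMOSpec

theorem AMO_kendall_B1_mass_general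
    (G Ginv D1 D2 f finv g : ℝ → ℝ) (C : ℝ → ℝ → ℝ)
    (μ : Measure (ℝ × ℝ)) [IsProbabilityMeasure μ]
    (hG : IsGenerator G)
    (hGinv : IsGenInv G Ginv)
    (hD1 : IsDistortion G D1) (hD2 : IsDistortion G D2)
    (hcase : xG G ≠ ⊤ → D2 ((xG G).toReal) ≤ D1 ((xG G).toReal))
    (hf : ∀ x : ℝ, f x = Function.invFunOn (fun w => w - D2 w) (distortionDomain G) (x - D1 x))
    (hg : ∀ x : ℝ, g x = D1 x + f x)
    (hC : AMOSpec G Ginv D1 D2 f finv C)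
    (hμ : ∀ u ∈ Set.Icc (0:ℝ) 1, ∀ v ∈ Set.Icc (0:ℝ) 1,
      μ (Set.Icc 0 u ×ˢ Set.Icc 0 v) = ENNReal.ofReal (C u v)) :
    ∀ t ∈ Set.Ioo (0:ℝ) 1, ∀ ut : ℝ,
      ut = G (Function.invFunOn g (distortionDomain G) (Ginv t)) →
      (μ {p : ℝ × ℝ | p.1 ∈ Set.Icc ut 1 ∧ p.2 ∈ Set.Icc (0:ℝ) 1 ∧
          p.2 ≤ G (Ginv t - D1 (Ginv p.1))}).toReal =
        -(deriv G (Ginv t) * D1 (Ginv ut)) := by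
  intro t ht ut hut
  have hf' := isHatInvComp_of_invFunOn hD1 hD2 hcase hf
  have ht' : t ∈ Ioc 0 1 := Ioo_subset_Ioc_self ht
  have hxt := hGinv.mem_distortionDomain ht'
  have hxt0 := hGinv.pos hG ht
  have hxtG := hG.ofReal_lt_xG hxt hxt0 (by rw [hGinv.right_inv t ht']; exact ht.1.ne')
  set xs := Function.invFunOn g (distortionDomain G) (Ginv t)
  obtain ⟨hxs, hgxs⟩ : xs ∈ distortionDomain G ∧ D1 xs + f xs = Ginv t := by
    have hex : ∃ w ∈ distortionDomain G, g w = Ginv t := by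
      simpa only [hg] using hf'.exists_add_eq hD1 hD2 hxt
    exact ⟨Function.invFunOn_mem hex, hg xs ▸ Function.invFunOn_eq hex⟩
  have hxs0 : 0 < xs := hxs.1.lt_of_ne' fun h => by
    rw [h, hD1.zero, hf'.apply_zero hD1 hD2] at hgxs; linarith
  have hxsG := (ENNReal.ofReal_le_ofReal (hf'.le_of_add_eq hD2 hxs hgxs)).trans_lt hxtG
  change μ.real (levelRegion G Ginv D1 (Ginv t) ut) = _
  rw [hut, hGinv.left_inv xs hxs.1 hxsG,
    hC.measureReal_levelRegion hG hGinv hD1 hD2 hcase hf' hμ hxs hxs0 hgxs hxtG, neg_mul]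

/-- in the proof of Theorem 4.1, with `g = D1 + f`,
`u_t = G(g⁻¹(G⁻¹(t)))` and
`B₁ = {(u,v) ∈ [0,1]² : u ∈ [u_t,1], v ≤ G(G⁻¹(t) − D₁(G⁻¹(u)))}`, one has
`μ(B₁) = −G′(G⁻¹(t))·D₁(G⁻¹(u_t))`. -/
theorem AMO_kendall_B1_mass
    (G Ginv D1 D2 f finv g : ℝ → ℝ) (C : ℝ → ℝ → ℝ)
    (μ : Measure (ℝ × ℝ)) [IsProbabilityMeasure μ]
    (hG : IsGenerator G)
    (hG' : ∀ x : ℝ, 0 < x → ENNReal.ofReal x < xG G → deriv G x < 0)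
    (hGinv : IsGenInv G Ginv)
    (hD1 : IsDistortion G D1) (hD2 : IsDistortion G D2)
    (hcase : xG G ≠ ⊤ → D2 ((xG G).toReal) ≤ D1 ((xG G).toReal))
    (hf : ∀ x : ℝ, f x = Function.invFunOn (fun w => w - D2 w) (distortionDomain G) (x - D1 x))
    (hfinv : ∀ x : ℝ, finv x =
      Function.invFunOn (fun w => w - D1 w) (distortionDomain G) (x - D2 x))
    (hg : ∀ x : ℝ, g x = D1 x + f x)
    (hC : AMOSpec G Ginv D1 D2 f finv C)
    (hμ : ∀ u ∈ Set.Icc (0:ℝ) 1, ∀ v ∈ Set.Icc (0:ℝ) 1,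
      μ (Set.Icc 0 u ×ˢ Set.Icc 0 v) = ENNReal.ofReal (C u v)) :
    ∀ t ∈ Set.Ioo (0:ℝ) 1, ∀ ut : ℝ,
      ut = G (Function.invFunOn g (distortionDomain G) (Ginv t)) →
      (μ {p : ℝ × ℝ | p.1 ∈ Set.Icc ut 1 ∧ p.2 ∈ Set.Icc (0:ℝ) 1 ∧
          p.2 ≤ G (Ginv t - D1 (Ginv p.1))}).toReal =
        -(deriv G (Ginv t) * D1 (Ginv ut)) :=
  AMO_kendall_B1_mass_general G Ginv D1 D2 f finv g C μ hG hGinv hD1 hD2 hcase hf hg hC hμ
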